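/- arXiv:2303.09614 — 4 statements merged into one kernel-verified Lean document; each statement's English description precedes it below -/
import Mathlib

section
/- For every integer d ≥ 1 and every real number λ ∈ [0,1], the polynomial A_d^λ(t), defined by the power-series identity Σ_{n≥0} (n+λ)^d t^n = A_d^λ(t)/(1−t)^{d+1}, has only nonnegative coefficients. -/
/-!
Write `F_d = ∑ (n + λ)^d t^n`. Since `F_{d+1} = (t d/dt + λ) F_d`, differentiating
`F_d (1 - t)^{d+1} = A_d` gives `A_{d+1} = t(1 - t) A_d' + ((d + 1)t + λ(1 - t)) A_d`, i.e.
`a^{d+1}_{m+1} = (m + 1 + λ) a^d_{m+1} + (d + 1 - m - λ) a^d_m`. For `λ ∈ [0, 1]` both weights are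
nonnegative whenever `m ≤ d`, and `a^d_m = 0` for `m > d`, so nonnegativity propagates from
`A_0 = 1`.
-/

open Polynomial
open scoped PowerSeries

noncomputable def eulerianPoly {R : Type*} [CommRing R] (lam : R) : ℕ → R[X]
  | 0 => 1
  | d + 1 => X * (1 - X) * derivative (eulerianPoly lam d)
      + (C ((d : R) + 1) * X + C lam * (1 - X)) * eulerianPoly lam d

section CommRing

variable {R : Type*} [CommRing R] (lam : R)

theorem PowerSeries.mk_add_pow_succ (d : ℕ) :
    (PowerSeries.mk fun n => ((n : R) + lam) ^ (d + 1)) =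
      PowerSeries.X * PowerSeries.derivative R (PowerSeries.mk fun n => ((n : R) + lam) ^ d)
        + PowerSeries.C lam * PowerSeries.mk fun n => ((n : R) + lam) ^ d := by
  ext (_ | n)
  · simp [pow_succ, mul_comm]
  · simp only [map_add, PowerSeries.coeff_succ_X_mul, PowerSeries.coeff_derivative,
      PowerSeries.coeff_C_mul, PowerSeries.coeff_mk]
    push_cast
    ring

theorem mk_add_pow_mul_one_sub_X_pow_eq_eulerianPoly (d : ℕ) :
    (PowerSeries.mk fun n => ((n : R) + lam) ^ d) * (1 - PowerSeries.X) ^ (d + 1)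
      = (eulerianPoly lam d : PowerSeries R) := by
  induction d with
  | zero =>
    ext (_ | n) <;> simp [eulerianPoly, mul_sub, PowerSeries.coeff_succ_mul_X]
  | succ d ih =>
    have hderiv := congrArg (PowerSeries.derivative R) ih
    simp only [Derivation.leibniz, Derivation.leibniz_pow, PowerSeries.derivative_coe, map_sub,
      Derivation.map_one_eq_zero, PowerSeries.derivative_X, smul_eq_mul, nsmul_eq_mul,
      Nat.add_sub_cancel] at hderiv
    rw [PowerSeries.mk_add_pow_succ, eulerianPoly]
    push_cast at hderiv ⊢
    rw [map_add, map_natCast, map_one]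
    linear_combination (PowerSeries.X * (1 - PowerSeries.X)) * hderiv
      + (((d : R⟦X⟧) + 1) * PowerSeries.X + PowerSeries.C lam * (1 - PowerSeries.X)) * ih

theorem coeff_eulerianPoly_succ_zero (d : ℕ) :
    (eulerianPoly lam (d + 1)).coeff 0 = lam * (eulerianPoly lam d).coeff 0 := by
  simp [eulerianPoly, mul_coeff_zero]

theorem coeff_eulerianPoly_succ_succ (d m : ℕ) :
    (eulerianPoly lam (d + 1)).coeff (m + 1)
      = ((m : R) + 1 + lam) * (eulerianPoly lam d).coeff (m + 1)
        + ((d : R) + 1 - m - lam) * (eulerianPoly lam d).coeff m := by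
  set p := eulerianPoly lam d
  have hp : eulerianPoly lam (d + 1)
      = X * (derivative p + C ((d : R) + 1) * p) - X * (X * derivative p + C lam * p)
        + C lam * p := by
    rw [eulerianPoly]; ring
  rcases m with _ | m <;>
  · simp only [hp, coeff_add, coeff_sub, coeff_X_mul, coeff_C_mul, coeff_derivative,
      mul_coeff_zero, coeff_X_zero, coeff_C_zero, zero_mul]
    push_cast
    ring

theorem natDegree_eulerianPoly_le (d : ℕ) : (eulerianPoly lam d).natDegree ≤ d := by
  induction d with
  | zero => simp [eulerianPoly]
  | succ d ih =>
    rw [natDegree_le_iff_coeff_eq_zero] at ih ⊢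
    rintro (_ | m) hm
    · omega
    · rw [coeff_eulerianPoly_succ_succ, ih (m + 1) (by omega), ih m (by omega)]
      ring

end CommRing

theorem coeff_eulerianPoly_nonneg {R : Type*} [CommRing R] [LinearOrder R] [IsStrictOrderedRing R]
    {lam : R} (h0 : 0 ≤ lam) (h1 : lam ≤ 1) (d i : ℕ) : 0 ≤ (eulerianPoly lam d).coeff i := by
  induction d generalizing i with
  | zero =>
    rw [eulerianPoly, coeff_one]
    split_ifs <;> norm_num
  | succ d ih =>
    rcases i with _ | m
    · rw [coeff_eulerianPoly_succ_zero]
      exact mul_nonneg h0 (ih 0)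
    · rw [coeff_eulerianPoly_succ_succ]
      refine add_nonneg (mul_nonneg (by positivity) (ih _)) ?_
      rcases le_or_gt m d with hmd | hdm
      · have : (m : R) ≤ d := by exact_mod_cast hmd
        exact mul_nonneg (by linarith) (ih m)
      · rw [coeff_eq_zero_of_natDegree_lt ((natDegree_eulerianPoly_le lam d).trans_lt hdm),
          mul_zero]

theorem eulerian_nonneg_coeffs_general (d : ℕ) (lam : ℝ)
    (hlam0 : 0 ≤ lam) (hlam1 : lam ≤ 1) (A : Polynomial ℝ)
    (hA : (PowerSeries.mk fun n => ((n : ℝ) + lam) ^ d) * (1 - PowerSeries.X) ^ (d + 1)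
        = (A : PowerSeries ℝ)) :
    ∀ i, 0 ≤ A.coeff i := by
  obtain rfl : A = eulerianPoly lam d :=
    Polynomial.coe_inj.mp (hA.symm.trans (mk_add_pow_mul_one_sub_X_pow_eq_eulerianPoly lam d))
  exact coeff_eulerianPoly_nonneg hlam0 hlam1 d

/-- For every integer `d ≥ 1` and every real `λ ∈ [0,1]`, the generalized
Eulerian polynomial `A_d^λ(t)`, i.e. the (unique) polynomial satisfying
`Σ_{n≥0} (n+λ)^d t^n = A_d^λ(t)/(1−t)^{d+1}` as formal power series, has only
nonnegative coefficients. -/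
theorem eulerian_nonneg_coeffs (d : ℕ) (hd : 1 ≤ d) (lam : ℝ)
    (hlam0 : 0 ≤ lam) (hlam1 : lam ≤ 1) (A : Polynomial ℝ)
    (hA : (PowerSeries.mk fun n => ((n : ℝ) + lam) ^ d) * (1 - PowerSeries.X) ^ (d + 1)
        = (A : PowerSeries ℝ)) :
    ∀ i, 0 ≤ A.coeff i :=
  eulerian_nonneg_coeffs_general d lam hlam0 hlam1 A hA
end

section
/- Let P = conv{(0,0), (1,0), (0,1)} ⊆ ℝ^2 be the standard triangle and let w(x) = (2x_1−x_2)^2(2x_2−x_1)^2. Then h*_{P,w}(t) = 8t + 81t^2 − 6t^3 + t^4; in particular, h*_{P,w}(t) has a negative coefficient even though w is a square of a product of linear forms. -/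
open scoped Pointwise

noncomputable section

open Finset Polynomial



-- inner sum
lemma wInnerSum (A : ℝ) : ∀ m : ℕ, ∑ b ∈ range m, (2*A - (b:ℝ))^2 * (2*(b:ℝ) - A)^2
    = (-2/15)*(m:ℝ) + (4/3)*(m:ℝ)^3 - 2*(m:ℝ)^4 + (4/5)*(m:ℝ)^5
      - 5*A*(m:ℝ)^2 + 10*A*(m:ℝ)^3 - 5*A*(m:ℝ)^4
      + (11/2)*A^2*(m:ℝ) - (33/2)*A^2*(m:ℝ)^2 + 11*A^2*(m:ℝ)^3
      + 10*A^3*(m:ℝ) - 10*A^3*(m:ℝ)^2 + 4*A^4*(m:ℝ) := by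
  intro m
  induction m with
  | zero => simp
  | succ m ih => rw [Finset.sum_range_succ, ih]; push_cast; ring

lemma sum_poly (c0 c1 c2 c3 c4 c5 : ℝ) : ∀ N : ℕ,
    ∑ a ∈ range N, (c0 + c1*(a:ℝ) + c2*(a:ℝ)^2 + c3*(a:ℝ)^3 + c4*(a:ℝ)^4 + c5*(a:ℝ)^5)
    = c0*(N:ℝ) + c1*((N:ℝ)*((N:ℝ)-1)/2) + c2*((N:ℝ)*((N:ℝ)-1)*(2*(N:ℝ)-1)/6)
      + c3*((N:ℝ)^2*((N:ℝ)-1)^2/4) + c4*((N:ℝ)*((N:ℝ)-1)*(2*(N:ℝ)-1)*(3*(N:ℝ)^2-3*(N:ℝ)-1)/30)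
      + c5*((N:ℝ)^2*((N:ℝ)-1)^2*(2*(N:ℝ)^2-2*(N:ℝ)-1)/12) := by
  intro N
  induction N with
  | zero => simp
  | succ N ih => rw [Finset.sum_range_succ, ih]; push_cast; ring

lemma Ssum (n : ℕ) :
    ∑ a ∈ range (n+1), ∑ b ∈ range (n+1-a), (2*(a:ℝ) - (b:ℝ))^2 * (2*(b:ℝ) - (a:ℝ))^2
    = (14*(n:ℝ)^6 + 138*(n:ℝ)^5 + 455*(n:ℝ)^4 + 520*(n:ℝ)^3 + 11*(n:ℝ)^2 - 178*(n:ℝ))/120 := by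
  set r : ℝ := (n:ℝ) with hr
  have key : ∀ a ∈ range (n+1),
      ∑ b ∈ range (n+1-a), (2*(a:ℝ) - (b:ℝ))^2 * (2*(b:ℝ) - (a:ℝ))^2
      = (((-2/15)*r + (4/3)*r^3 + 2*r^4 + (4/5)*r^5)
        + ((2/15) - 9*r^2 - 18*r^3 - 9*r^4)*(a:ℝ)
        + ((39/2)*r + (117/2)*r^2 + 39*r^3)*(a:ℝ)^2
        + ((-71/6) - 81*r - 81*r^2)*(a:ℝ)^3
        + ((85/2) + 81*r)*(a:ℝ)^4
        + (-154/5)*(a:ℝ)^5) := by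
    intro a ha
    rw [wInnerSum]
    have ha' : a ≤ n + 1 := by simp at ha; omega
    rw [Nat.cast_sub ha']
    push_cast
    ring
  rw [Finset.sum_congr rfl key, sum_poly]
  push_cast
  ring



lemma hullEq : convexHull ℝ ({![0, 0], ![1, 0], ![0, 1]} : Set (Fin 2 → ℝ))
    = {y : Fin 2 → ℝ | 0 ≤ y 0 ∧ 0 ≤ y 1 ∧ y 0 + y 1 ≤ 1} := by
  apply le_antisymm
  · apply convexHull_min
    · rintro y (rfl | rfl | rfl) <;> norm_num
    · rintro y ⟨hy0, hy1, hy2⟩ z ⟨hz0, hz1, hz2⟩ s t hs ht hst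
      refine ⟨?_, ?_, ?_⟩ <;> simp only [Pi.add_apply, Pi.smul_apply, smul_eq_mul]
      · have := mul_nonneg hs hy0; have := mul_nonneg ht hz0; linarith
      · have := mul_nonneg hs hy1; have := mul_nonneg ht hz1; linarith
      · nlinarith
  · rintro y ⟨hy0, hy1, hy2⟩
    have hmem : ∀ i : Fin 3, (![![0,0], ![1,0], ![0,1]] i : Fin 2 → ℝ)
        ∈ convexHull ℝ ({![0, 0], ![1, 0], ![0, 1]} : Set (Fin 2 → ℝ)) := by
      intro i
      apply subset_convexHull
      fin_cases i <;> simp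
    have h := (convex_convexHull ℝ ({![0, 0], ![1, 0], ![0, 1]} : Set (Fin 2 → ℝ))).sum_mem
      (t := (Finset.univ : Finset (Fin 3))) (w := ![1 - y 0 - y 1, y 0, y 1])
      (z := ![![0,0], ![1,0], ![0,1]])
      (by intro i _; fin_cases i <;> simp <;> linarith)
      (by simp [Fin.sum_univ_three]; ring)
      (by intro i _; exact hmem i)
    convert h using 1
    funext j
    fin_cases j <;> simp [Fin.sum_univ_three] <;> ring

lemma smulHull (n : ℕ) : (n : ℝ) • convexHull ℝ ({![0, 0], ![1, 0], ![0, 1]} : Set (Fin 2 → ℝ))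
    = {y : Fin 2 → ℝ | 0 ≤ y 0 ∧ 0 ≤ y 1 ∧ y 0 + y 1 ≤ (n:ℝ)} := by
  rw [hullEq]
  rcases Nat.eq_zero_or_pos n with rfl | hn
  · rw [Nat.cast_zero, Set.zero_smul_set ⟨0, by norm_num⟩]
    ext y
    simp only [Set.mem_singleton_iff, Set.mem_setOf_eq]
    constructor
    · rintro rfl; norm_num
    · rintro ⟨h0, h1, h2⟩
      funext i
      fin_cases i <;> simp <;> linarith
  · have hn' : (0:ℝ) < n := by exact_mod_cast hn
    ext y
    rw [Set.mem_smul_set_iff_inv_smul_mem₀ (ne_of_gt hn')]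
    simp only [Set.mem_setOf_eq, Pi.smul_apply, smul_eq_mul]
    have hi : (0:ℝ) < ((n:ℝ))⁻¹ := by positivity
    constructor
    · rintro ⟨h0, h1, h2⟩
      refine ⟨by nlinarith, by nlinarith, by nlinarith [mul_inv_cancel₀ (ne_of_gt hn')]⟩
    · rintro ⟨h0, h1, h2⟩
      refine ⟨by positivity, by positivity, by nlinarith [mul_inv_cancel₀ (ne_of_gt hn')]⟩

lemma setEqFinset (n : ℕ) :
    {x : Fin 2 → ℤ | (fun i => ((x i : ℝ)))
        ∈ (n : ℝ) • convexHull ℝ ({![0, 0], ![1, 0], ![0, 1]} : Set (Fin 2 → ℝ))}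
    = ↑((((range (n+1)) ×ˢ (range (n+1))).filter fun p => p.1 + p.2 ≤ n).image
        (fun p : ℕ × ℕ => (![(p.1:ℤ), (p.2:ℤ)] : Fin 2 → ℤ))) := by
  ext x
  simp only [Set.mem_setOf_eq, smulHull, Finset.coe_image, Set.mem_image, Finset.mem_coe,
    Finset.mem_filter, Finset.mem_product, Finset.mem_range]
  constructor
  · rintro ⟨h0, h1, h2⟩
    have hx0 : 0 ≤ x 0 := by exact_mod_cast h0
    have hx1 : 0 ≤ x 1 := by exact_mod_cast h1
    have hx2 : x 0 + x 1 ≤ (n:ℤ) := by exact_mod_cast h2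
    refine ⟨((x 0).toNat, (x 1).toNat), ⟨⟨by omega, by omega⟩, by omega⟩, ?_⟩
    funext i
    fin_cases i <;> simp <;> omega
  · rintro ⟨⟨a, b⟩, ⟨⟨ha, hb⟩, hab⟩, rfl⟩
    simp only [Matrix.cons_val_zero, Matrix.cons_val_one, Matrix.head_cons]
    push_cast
    refine ⟨by positivity, by positivity, by exact_mod_cast hab⟩

lemma finsumEq (n : ℕ) :
    (∑ᶠ x ∈ {x : Fin 2 → ℤ | (fun i => ((x i : ℝ)))
        ∈ (n : ℝ) • convexHull ℝ ({![0, 0], ![1, 0], ![0, 1]} : Set (Fin 2 → ℝ))},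
      (2 * (x 0 : ℝ) - (x 1 : ℝ)) ^ 2 * (2 * (x 1 : ℝ) - (x 0 : ℝ)) ^ 2)
    = ∑ a ∈ range (n+1), ∑ b ∈ range (n+1-a), (2*(a:ℝ) - (b:ℝ))^2 * (2*(b:ℝ) - (a:ℝ))^2 := by
  rw [setEqFinset, finsum_mem_coe_finset]
  rw [Finset.sum_image (by
    intro p _ q _ h
    have h0 := congrFun h 0
    have h1 := congrFun h 1
    simp only [Matrix.cons_val_zero, Matrix.cons_val_one, Matrix.head_cons, Nat.cast_inj] at h0 h1
    exact Prod.ext h0 h1)]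
  rw [Finset.sum_filter, Finset.sum_product]
  refine Finset.sum_congr rfl fun a ha => ?_
  rw [← Finset.sum_filter]
  have ha' : a ≤ n := by simp at ha; omega
  have : (range (n+1)).filter (fun b => a + b ≤ n) = range (n+1-a) := by
    ext b; simp only [Finset.mem_filter, Finset.mem_range]; omega
  rw [this]
  refine Finset.sum_congr rfl fun b _ => ?_
  simp only [Matrix.cons_val_zero, Matrix.cons_val_one, Matrix.head_cons]
  push_cast
  ring



def hstarPfun (n : ℕ) : ℝ :=
  (14*(n:ℝ)^6 + 138*(n:ℝ)^5 + 455*(n:ℝ)^4 + 520*(n:ℝ)^3 + 11*(n:ℝ)^2 - 178*(n:ℝ))/120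

def hstarQ : ℝ[X] := (1 - Polynomial.X)^7

lemma hstarQexp : hstarQ = C 1 - C 7 * X + C 21 * X^2 - C 35 * X^3 + C 35 * X^4 - C 21 * X^5
    + C 7 * X^6 - C 1 * X^7 := by
  simp only [map_ofNat, map_one, hstarQ]
  ring

lemma hstarQcoe : ((hstarQ : ℝ[X]) : PowerSeries ℝ) = (1 - PowerSeries.X)^7 := by
  simp [hstarQ]

lemma hstarQdeg : ∀ k, 8 ≤ k → hstarQ.coeff k = 0 := by
  intro k hk
  apply Polynomial.coeff_eq_zero_of_natDegree_lt
  have h1 : (1 - Polynomial.X : ℝ[X]) = -(Polynomial.X - Polynomial.C 1) := by rw [map_one]; ring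
  calc hstarQ.natDegree ≤ 7 * (1 - Polynomial.X : ℝ[X]).natDegree := Polynomial.natDegree_pow_le
    _ = 7 * 1 := by rw [h1, Polynomial.natDegree_neg, Polynomial.natDegree_X_sub_C]
    _ < k := by omega

lemma hstarhstarQcoeff : ∀ k, hstarQ.coeff k = if k = 0 then 1 else if k = 1 then -7 else if k = 2 then 21
    else if k = 3 then -35 else if k = 4 then 35 else if k = 5 then -21 else if k = 6 then 7
    else if k = 7 then -1 else 0 := by
  intro k
  rw [hstarQexp]
  simp only [Polynomial.coeff_sub, Polynomial.coeff_add, Polynomial.coeff_C_mul,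
    Polynomial.coeff_X_pow, Polynomial.coeff_C, mul_ite, mul_one, mul_zero,
    Polynomial.coeff_X]
  split_ifs <;> first | omega | norm_num

def hstarRpoly : ℝ[X] := C 8 * X + C 81 * X^2 - C 6 * X^3 + X^4

lemma hstarRcoeff : ∀ k, hstarRpoly.coeff k = if k = 1 then 8 else if k = 2 then 81
    else if k = 3 then -6 else if k = 4 then 1 else 0 := by
  intro k
  simp only [hstarRpoly, Polynomial.coeff_add, Polynomial.coeff_sub, Polynomial.coeff_C_mul,
    Polynomial.coeff_X_pow, Polynomial.coeff_X, mul_ite, mul_one, mul_zero]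
  split_ifs <;> first | omega | norm_num

lemma hstarqc0 : hstarQ.coeff 0 = 1 := by rw [hstarhstarQcoeff]; norm_num
lemma hstarqc1 : hstarQ.coeff 1 = -7 := by rw [hstarhstarQcoeff]; norm_num
lemma hstarqc2 : hstarQ.coeff 2 = 21 := by rw [hstarhstarQcoeff]; norm_num
lemma hstarqc3 : hstarQ.coeff 3 = -35 := by rw [hstarhstarQcoeff]; norm_num
lemma hstarqc4 : hstarQ.coeff 4 = 35 := by rw [hstarhstarQcoeff]; norm_num
lemma hstarqc5 : hstarQ.coeff 5 = -21 := by rw [hstarhstarQcoeff]; norm_num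
lemma hstarqc6 : hstarQ.coeff 6 = 7 := by rw [hstarhstarQcoeff]; norm_num
lemma hstarqc7 : hstarQ.coeff 7 = -1 := by rw [hstarhstarQcoeff]; norm_num

lemma hstarSeries : (PowerSeries.mk hstarPfun) * (1 - PowerSeries.X)^7
    = ((hstarRpoly : ℝ[X]) : PowerSeries ℝ) := by
  rw [← hstarQcoe, mul_comm]
  ext n
  rw [PowerSeries.coeff_mul, Finset.Nat.sum_antidiagonal_eq_sum_range_succ_mk]
  simp only [Polynomial.coeff_coe, PowerSeries.coeff_mk]
  rcases lt_or_ge n 7 with h | h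
  · interval_cases n <;>
      simp only [Finset.sum_range_succ, Finset.sum_range_zero, hstarqc0, hstarqc1, hstarqc2, hstarqc3, hstarqc4, hstarqc5,
        hstarqc6, hstarRcoeff, hstarPfun] <;>
      norm_num
  · obtain ⟨m, rfl⟩ : ∃ m, n = m + 7 := ⟨n - 7, by omega⟩
    have hR : hstarRpoly.coeff (m + 7) = 0 := by
      rw [hstarRcoeff, if_neg (by omega), if_neg (by omega), if_neg (by omega), if_neg (by omega)]
    rw [hR, ← Finset.sum_subset (Finset.range_subset_range.mpr (by omega : 8 ≤ m + 7 + 1))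
      (fun k _ hk => by rw [hstarQdeg k (by simpa using hk)]; ring)]
    have e1 : m + 7 - 1 = m + 6 := by omega
    have e2 : m + 7 - 2 = m + 5 := by omega
    have e3 : m + 7 - 3 = m + 4 := by omega
    have e4 : m + 7 - 4 = m + 3 := by omega
    have e5 : m + 7 - 5 = m + 2 := by omega
    have e6 : m + 7 - 6 = m + 1 := by omega
    have e7 : m + 7 - 7 = m := by omega
    simp only [Finset.sum_range_succ, Finset.sum_range_zero, hstarqc0, hstarqc1, hstarqc2, hstarqc3, hstarqc4, hstarqc5,
      hstarqc6, hstarqc7, e1, e2, e3, e4, e5, e6, e7, Nat.sub_zero, hstarPfun]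
    push_cast
    ring

/-- For the standard triangle `P = conv{(0,0),(1,0),(0,1)} ⊆ ℝ²` and the
weight `w(x) = (2x₁−x₂)²(2x₂−x₁)²` (homogeneous of degree 4), the weighted `h*`-polynomial,
defined by `Σ_{n≥0} (Σ_{x∈nP∩ℤ²} w(x)) tⁿ = h*(t)/(1−t)⁷`, equals `8t + 81t² − 6t³ + t⁴`;
in particular it has a negative coefficient although `w` is a square of a product of linear
forms. -/
theorem standard_triangle_degree_four_negative_coefficient :
    (PowerSeries.mk fun n =>
        ∑ᶠ x ∈ {x : Fin 2 → ℤ | (fun i => ((x i : ℝ)))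
            ∈ (n : ℝ) • convexHull ℝ ({![0, 0], ![1, 0], ![0, 1]} : Set (Fin 2 → ℝ))},
          (2 * (x 0 : ℝ) - (x 1 : ℝ)) ^ 2 * (2 * (x 1 : ℝ) - (x 0 : ℝ)) ^ 2)
        * (1 - PowerSeries.X) ^ 7
      = ((Polynomial.C (8 : ℝ) * Polynomial.X + Polynomial.C 81 * Polynomial.X ^ 2
          - Polynomial.C 6 * Polynomial.X ^ 3 + Polynomial.X ^ 4 : Polynomial ℝ)
        : PowerSeries ℝ) ∧
    (Polynomial.C (8 : ℝ) * Polynomial.X + Polynomial.C 81 * Polynomial.X ^ 2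
        - Polynomial.C 6 * Polynomial.X ^ 3 + Polynomial.X ^ 4 : Polynomial ℝ).coeff 3 < 0 := by
  constructor
  · have hfun : (fun n : ℕ =>
        ∑ᶠ x ∈ {x : Fin 2 → ℤ | (fun i => ((x i : ℝ)))
            ∈ (n : ℝ) • convexHull ℝ ({![0, 0], ![1, 0], ![0, 1]} : Set (Fin 2 → ℝ))},
          (2 * (x 0 : ℝ) - (x 1 : ℝ)) ^ 2 * (2 * (x 1 : ℝ) - (x 0 : ℝ)) ^ 2)
        = hstarPfun := by
      funext n
      rw [finsumEq n, Ssum n]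
      rfl
    rw [hfun]
    exact hstarSeries
  · show hstarRpoly.coeff 3 < 0
    rw [hstarRcoeff]
    norm_num
end
end

section
/- Let P ⊆ ℝ^2 be the non-convex lattice quadrilateral with vertices v_0=(1,0), v_1=(−3,−1), v_2=(2,0), v_3=(−3,1) (explicitly, P = conv{v_0,v_1,v_2} ∪ conv{v_0,v_2,v_3}), and let w(x) = x_1^2. Then the polynomial h*_{P,w}(t) defined by Σ_{n≥0} ( Σ_{x ∈ nP∩ℤ^2} x_1^2 ) t^n = h*_{P,w}(t)/(1−t)^5 equals 23t − 4t^2 + 9t^3; in particular, it has a negative coefficient, so the nonnegativity of weighted h*-polynomials of convex lattice polygons with respect to squares of linear forms fails for non-convex polygons. -/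
/-!
`n • P` is cut out by `n - 4|y₁| ≤ y₀ ≤ 2n - 5|y₁|`, so its lattice points in the row `y₁ = b`
are the integers of an interval. Summing squares over the rows with Faulhaber's formulas gives
`Σ_{x ∈ nP ∩ ℤ²} x₀² = 23·C(n+3,4) − 4·C(n+2,4) + 9·C(n+1,4)`, and
`Σₙ C(n+4−k,4) tⁿ = tᵏ/(1−t)⁵`.
-/

open scoped Pointwise

noncomputable section

/-- The non-convex lattice quadrilateral with vertices `v₀=(1,0)`, `v₁=(−3,−1)`, `v₂=(2,0)`,
`v₃=(−3,1)`, explicitly `P = conv{v₀,v₁,v₂} ∪ conv{v₀,v₂,v₃}`. -/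
def nonConvexQuad : Set (Fin 2 → ℝ) :=
  convexHull ℝ ({![1, 0], ![-3, -1], ![2, 0]} : Set (Fin 2 → ℝ)) ∪
    convexHull ℝ ({![1, 0], ![2, 0], ![-3, 1]} : Set (Fin 2 → ℝ))

theorem mem_convexHull_triple {𝕜 E : Type*} [Field 𝕜] [LinearOrder 𝕜] [IsStrictOrderedRing 𝕜]
    [AddCommGroup E] [Module 𝕜 E] {a b c x : E} {α β γ : 𝕜} (hα : 0 ≤ α) (hβ : 0 ≤ β)
    (hγ : 0 ≤ γ) (hsum : α + β + γ = 1) (hx : α • a + β • b + γ • c = x) :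
    x ∈ convexHull 𝕜 {a, b, c} :=
  mem_convexHull_of_exists_fintype ![α, β, γ] ![a, b, c]
    (by simp [Fin.forall_fin_succ, hα, hβ, hγ]) (by simpa [Fin.sum_univ_three])
    (by simp [Fin.forall_fin_succ]) (by simpa [Fin.sum_univ_three])

theorem mem_convexHull_lower_triangle_iff (y : Fin 2 → ℝ) :
    y ∈ convexHull ℝ ({![1, 0], ![-3, -1], ![2, 0]} : Set (Fin 2 → ℝ)) ↔
      y 1 ≤ 0 ∧ 1 + 4 * y 1 ≤ y 0 ∧ y 0 ≤ 2 + 5 * y 1 := by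
  refine ⟨fun hy => ?_, fun ⟨h₁, h₂, h₃⟩ => ?_⟩
  · refine convexHull_min (t := {z | z 1 ≤ 0 ∧ 1 + 4 * z 1 ≤ z 0 ∧ z 0 ≤ 2 + 5 * z 1})
      ?_ ?_ hy
    · rintro z (rfl | rfl | rfl) <;> norm_num
    · intro u hu v hv s t hs ht hst
      simp only [Set.mem_ofPred_eq, Pi.add_apply, Pi.smul_apply, smul_eq_mul] at *
      refine ⟨by nlinarith, by nlinarith, by nlinarith⟩
  · refine mem_convexHull_triple (α := 2 + 5 * y 1 - y 0) (β := -y 1) (γ := y 0 - 4 * y 1 - 1)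
      (by linarith) (by linarith) (by linarith) (by ring) ?_
    ext i; fin_cases i <;> simp
    ring

theorem mem_convexHull_upper_triangle_iff (y : Fin 2 → ℝ) :
    y ∈ convexHull ℝ ({![1, 0], ![2, 0], ![-3, 1]} : Set (Fin 2 → ℝ)) ↔
      0 ≤ y 1 ∧ 1 - 4 * y 1 ≤ y 0 ∧ y 0 ≤ 2 - 5 * y 1 := by
  refine ⟨fun hy => ?_, fun ⟨h₁, h₂, h₃⟩ => ?_⟩
  · refine convexHull_min (t := {z | 0 ≤ z 1 ∧ 1 - 4 * z 1 ≤ z 0 ∧ z 0 ≤ 2 - 5 * z 1})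
      ?_ ?_ hy
    · rintro z (rfl | rfl | rfl) <;> norm_num
    · intro u hu v hv s t hs ht hst
      simp only [Set.mem_ofPred_eq, Pi.add_apply, Pi.smul_apply, smul_eq_mul] at *
      refine ⟨by nlinarith, by nlinarith, by nlinarith⟩
  · refine mem_convexHull_triple (α := 2 - 5 * y 1 - y 0) (β := y 0 + 4 * y 1 - 1) (γ := y 1)
      (by linarith) (by linarith) (by linarith) (by ring) ?_
    ext i; fin_cases i <;> simp
    ring

theorem mem_nonConvexQuad_iff (y : Fin 2 → ℝ) :
    y ∈ nonConvexQuad ↔ 1 - 4 * |y 1| ≤ y 0 ∧ y 0 ≤ 2 - 5 * |y 1| := by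
  rw [nonConvexQuad, Set.mem_union, mem_convexHull_lower_triangle_iff,
    mem_convexHull_upper_triangle_iff]
  rcases le_total (y 1) 0 with h | h
  · rw [abs_of_nonpos h]
    constructor
    · rintro (⟨-, h₁, h₂⟩ | ⟨h₀, h₁, h₂⟩) <;> constructor <;> linarith
    · exact fun ⟨h₁, h₂⟩ => Or.inl ⟨h, by linarith, by linarith⟩
  · rw [abs_of_nonneg h]
    constructor
    · rintro (⟨h₀, h₁, h₂⟩ | ⟨-, h₁, h₂⟩) <;> constructor <;> linarith
    · exact fun ⟨h₁, h₂⟩ => Or.inr ⟨h, by linarith, by linarith⟩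

theorem mem_smul_nonConvexQuad_iff (n : ℕ) (y : Fin 2 → ℝ) :
    y ∈ (n : ℝ) • nonConvexQuad ↔ n - 4 * |y 1| ≤ y 0 ∧ y 0 ≤ 2 * n - 5 * |y 1| := by
  rcases n.eq_zero_or_pos with rfl | hn
  · rw [Nat.cast_zero, Set.zero_smul_set ⟨![1, 0], by norm_num [mem_nonConvexQuad_iff]⟩,
      Set.mem_zero]
    constructor
    · rintro rfl
      norm_num
    · rintro ⟨h₁, h₂⟩
      have h₀ : y 1 = 0 := abs_nonpos_iff.mp (by linarith)
      rw [h₀, abs_zero] at h₁ h₂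
      ext i; fin_cases i <;> simp [h₀]; linarith
  · have hn : (0 : ℝ) < n := by exact_mod_cast hn
    obtain ⟨z, rfl⟩ : ∃ z, y = (n : ℝ) • z := ⟨(n : ℝ)⁻¹ • y, (smul_inv_smul₀ hn.ne' y).symm⟩
    rw [Set.smul_mem_smul_set_iff₀ hn.ne', mem_nonConvexQuad_iff]
    simp only [Pi.smul_apply, smul_eq_mul, abs_mul, abs_of_pos hn]
    constructor <;> rintro ⟨h₁, h₂⟩ <;> constructor <;> nlinarith

theorem finsum_sq_smul_nonConvexQuad_eq_sum_rows (n : ℕ) :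
    ∑ᶠ x ∈ {x : Fin 2 → ℤ | (fun i => (x i : ℝ)) ∈ (n : ℝ) • nonConvexQuad}, (x 0 : ℝ) ^ 2 =
      ∑ b ∈ Finset.Icc (-n : ℤ) n,
        ∑ a ∈ Finset.Icc (n - 4 * |b|) (2 * n - 5 * |b|), (a : ℝ) ^ 2 := by
  let r : Finset (ℤ × ℤ) := (Finset.Icc (-3 * n : ℤ) (2 * n) ×ˢ Finset.Icc (-n : ℤ) n).filter
    fun p => (n : ℤ) - 4 * |p.2| ≤ p.1 ∧ p.1 ≤ 2 * n - 5 * |p.2|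
  have hr (p : ℤ × ℤ) : p ∈ r ↔ p.2 ∈ Finset.Icc (-n : ℤ) n ∧
      p.1 ∈ Finset.Icc (n - 4 * |p.2|) (2 * n - 5 * |p.2|) := by
    simp only [r, Finset.mem_filter, Finset.mem_product, Finset.mem_Icc]
    have := le_abs_self p.2; have := neg_abs_le p.2
    omega
  have hset : {x : Fin 2 → ℤ | (fun i => (x i : ℝ)) ∈ (n : ℝ) • nonConvexQuad} =
      ↑(r.map (finTwoArrowEquiv ℤ).symm.toEmbedding) := by
    ext x
    rw [Finset.mem_coe, Finset.mem_map_equiv, hr, Set.mem_ofPred_eq, mem_smul_nonConvexQuad_iff,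
      Equiv.symm_symm, show finTwoArrowEquiv ℤ x = (x 0, x 1) from rfl]
    simp only [Finset.mem_Icc, ← Int.cast_abs]
    norm_cast
    have := le_abs_self (x 1); have := neg_abs_le (x 1)
    omega
  rw [hset, finsum_mem_coe_finset, Finset.sum_map, Finset.sum_finset_product_right r _
    (fun b => Finset.Icc ((n : ℤ) - 4 * |b|) (2 * n - 5 * |b|)) hr]
  simp

theorem sum_Icc_intCast_sq {K : Type*} [Field K] [CharZero K] (l u : ℤ) (h : l - 1 ≤ u) :
    ∑ a ∈ Finset.Icc l u, (a : K) ^ 2 =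
      (u * (u + 1) * (2 * u + 1) - (l - 1) * l * (2 * l - 1)) / 6 := by
  induction u, h using Int.leInduction with
  | base => rw [Finset.Icc_eq_empty (by omega)]; push_cast; ring
  | succ u hu ih =>
    rw [← Finset.insert_Icc_right_eq_Icc_add_one (by omega), Finset.sum_insert (by simp), ih]
    push_cast; ring

theorem sum_range_cubic {K : Type*} [Field K] [CharZero K] (c₀ c₁ c₂ c₃ : K) (m : ℕ) :
    ∑ k ∈ Finset.range m, (c₀ + c₁ * k + c₂ * k ^ 2 + c₃ * k ^ 3) =
      c₀ * m + c₁ * (m * (m - 1) / 2) + c₂ * (m * (m - 1) * (2 * m - 1) / 6)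
        + c₃ * (m * (m - 1) / 2) ^ 2 := by
  induction m with
  | zero => simp
  | succ m ih => rw [Finset.sum_range_succ, ih]; push_cast; ring

theorem sum_Icc_neg_comp_abs {M : Type*} [AddCommGroup M] (g : ℤ → M) (n : ℕ) :
    ∑ b ∈ Finset.Icc (-n : ℤ) n, g |b| = 2 • ∑ k ∈ Finset.range (n + 1), g k - g 0 := by
  induction n with
  | zero => simp [two_nsmul]
  | succ n ih =>
    have hIcc : Finset.Icc (-(n + 1 : ℕ) : ℤ) (n + 1 : ℕ) =
        insert (-(n + 1 : ℤ)) (insert (n + 1 : ℤ) (Finset.Icc (-n : ℤ) n)) := by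
      ext b; simp only [Finset.mem_Icc, Finset.mem_insert]; omega
    rw [hIcc, Finset.sum_insert (by simp; omega), Finset.sum_insert (by simp), ih,
      Finset.sum_range_succ _ (n + 1), abs_neg, abs_of_nonneg (by omega)]
    push_cast; simp only [two_nsmul]; abel

theorem Nat.cast_choose_four {K : Type*} [Field K] [CharZero K] (m : ℕ) :
    (m.choose 4 : K) = m * (m - 1) * (m - 2) * (m - 3) / 24 := by
  simp [Nat.cast_choose_eq_descPochhammer_div, descPochhammer_succ_right, Nat.factorial]

theorem sum_rows_nonConvexQuad_eq_choose (n : ℕ) :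
    ∑ b ∈ Finset.Icc (-n : ℤ) n, ∑ a ∈ Finset.Icc (n - 4 * |b|) (2 * n - 5 * |b|), (a : ℝ) ^ 2 =
      23 * ((n + 3).choose 4 : ℝ) - 4 * ((n + 2).choose 4 : ℝ) + 9 * ((n + 1).choose 4 : ℝ) := by
  have hrow (k : ℕ) (hk : k ∈ Finset.range (n + 1)) :
      ∑ a ∈ Finset.Icc ((n : ℤ) - 4 * k) (2 * n - 5 * k), (a : ℝ) ^ 2 =
        (7 / 3 * n ^ 3 + 5 / 2 * n ^ 2 + 1 / 6 * n) + (-16 * n ^ 2 - 14 * n - 1 / 6) * k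
          + (34 * n + 41 / 2) * k ^ 2 + (-61 / 3) * k ^ 3 := by
    rw [sum_Icc_intCast_sq _ _ (by simp at hk; omega)]
    push_cast; ring
  rw [sum_Icc_neg_comp_abs fun k => ∑ a ∈ Finset.Icc ((n : ℤ) - 4 * k) (2 * n - 5 * k),
      (a : ℝ) ^ 2, Finset.sum_congr rfl hrow, sum_range_cubic, sum_Icc_intCast_sq _ _ (by omega),
    Nat.cast_choose_four, Nat.cast_choose_four, Nat.cast_choose_four]
  push_cast; ring

theorem PowerSeries.mk_choose_add_mul_one_sub_pow {R : Type*} [CommRing R] {d j : ℕ}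
    (hj : j ≤ d) : (mk fun n => ((n + j).choose d : R)) * (1 - X) ^ (d + 1) = X ^ (d - j) := by
  have hshift :
      (mk fun n => ((n + j).choose d : R)) = X ^ (d - j) * mk fun n => ((d + n).choose d : R) := by
    ext n
    rw [coeff_X_pow_mul', coeff_mk, coeff_mk]
    split_ifs with h
    · congr 2; omega
    · rw [Nat.choose_eq_zero_of_lt (by omega), Nat.cast_zero]
  rw [hshift, mul_assoc, mk_add_choose_mul_one_sub_pow_eq_one, mul_one]

/-- For the non-convex lattice quadrilateral `P` above and the weight
`w(x) = x₁²`, the polynomial `h*_{P,w}` defined by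
`Σ_{n≥0} (Σ_{x∈nP∩ℤ²} x₁²) tⁿ = h*_{P,w}(t)/(1−t)⁵` equals `23t − 4t² + 9t³`; in particular it
has a negative coefficient, so nonnegativity fails for non-convex polygons. -/
theorem nonconvex_quadrilateral_negative_coefficient :
    (PowerSeries.mk fun n =>
        ∑ᶠ x ∈ {x : Fin 2 → ℤ | (fun i => ((x i : ℝ))) ∈ (n : ℝ) • nonConvexQuad},
          ((x 0 : ℝ)) ^ 2)
        * (1 - PowerSeries.X) ^ 5
      = ((Polynomial.C (23 : ℝ) * Polynomial.X - Polynomial.C 4 * Polynomial.X ^ 2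
          + Polynomial.C 9 * Polynomial.X ^ 3 : Polynomial ℝ) : PowerSeries ℝ) ∧
    (Polynomial.C (23 : ℝ) * Polynomial.X - Polynomial.C 4 * Polynomial.X ^ 2
        + Polynomial.C 9 * Polynomial.X ^ 3 : Polynomial ℝ).coeff 2 < 0 := by
  refine ⟨?_, by simp [Polynomial.coeff_X_pow]⟩
  have hseries : (PowerSeries.mk fun n =>
      ∑ᶠ x ∈ {x : Fin 2 → ℤ | (fun i => ((x i : ℝ))) ∈ (n : ℝ) • nonConvexQuad},
        ((x 0 : ℝ)) ^ 2) =
      PowerSeries.C 23 * PowerSeries.mk (fun n => ((n + 3).choose 4 : ℝ))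
        - PowerSeries.C 4 * PowerSeries.mk (fun n => ((n + 2).choose 4 : ℝ))
        + PowerSeries.C 9 * PowerSeries.mk (fun n => ((n + 1).choose 4 : ℝ)) := by
    ext n
    rw [PowerSeries.coeff_mk, finsum_sq_smul_nonConvexQuad_eq_sum_rows,
      sum_rows_nonConvexQuad_eq_choose]
    simp
  rw [hseries, add_mul, sub_mul, mul_assoc, mul_assoc, mul_assoc,
    PowerSeries.mk_choose_add_mul_one_sub_pow (by norm_num),
    PowerSeries.mk_choose_add_mul_one_sub_pow (by norm_num),
    PowerSeries.mk_choose_add_mul_one_sub_pow (by norm_num)]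
  simp
end
end

section
/- For an integer q ≥ 1, let Δ_q ⊆ ℝ^2 be the rational triangle with vertices (1,1), (1,(q−1)/q), ((q+1)/q, 1) (which has denominator q), let ℓ_q(x) = 2q(1−q)x_1 + q(2q−1)x_2, and let w_q = ℓ_q^2. Then the coefficient of t^{2q−1} in h*_{Δ_q,w_q}(t) equals q^2(−q^2+6q−3) = −q^4+6q^3−3q^2; in particular, for every integer q ≥ 6 this coefficient is negative. -/
open scoped Pointwise

noncomputable section

/-!
For `n < 2q` the dilate `nΔ_q` is cut out by `n ≤ x₁`, `x₂ ≤ n`, `q(x₁ − x₂) ≤ n`, so its only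
lattice point for `n = q − 1` is `(q−1, q−1)`, where `ℓ_q = q(q−1)`, and for `n = 2q − 1` its
lattice points are `(n, n)`, `(n+1, n)`, `(n, n−1)`, where `ℓ_q` takes the values `q(2q−1)`, `q`,
`0`. As `(1 − t^q)⁵ ≡ 1 − 5t^q` modulo `t^{2q}`, the coefficient of `t^{2q−1}` is
`L(2q−1) − 5L(q−1) = q²((2q−1)² + 1 − 5(q−1)²)`, writing `L(n)` for the weighted lattice point count.
-/

theorem PowerSeries.coeff_add_one_sub_X_pow_pow_five_mul {R : Type*} [CommRing R] {m q : ℕ}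
    (hm : m < q) (φ : PowerSeries R) :
    coeff (m + q) ((1 - X ^ q) ^ 5 * φ) = coeff (m + q) φ - 5 * coeff m φ := by
  have hexpand : (1 - X ^ q) ^ 5 * φ
      = φ - C (5 : R) * (X ^ q * φ)
        + X ^ (2 * q) * ((10 - 10 * X ^ q + 5 * X ^ (2 * q) - X ^ (3 * q)) * φ) := by
    simp only [map_ofNat, pow_mul']
    ring
  rw [hexpand, map_add, map_sub, coeff_C_mul, coeff_X_pow_mul', coeff_X_pow_mul',
    if_pos (by omega), if_neg (by omega), Nat.add_sub_cancel, add_zero]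

def triangle (c : ℝ) : Set (Fin 2 → ℝ) :=
  convexHull ℝ {![1, 1], ![1, (c - 1) / c], ![(c + 1) / c, 1]}

theorem mem_triangle_iff {c : ℝ} (hc : 0 < c) {y : Fin 2 → ℝ} :
    y ∈ triangle c ↔ 1 ≤ y 0 ∧ y 1 ≤ 1 ∧ c * (y 0 - y 1) ≤ 1 := by
  constructor
  · refine fun hy =>
      convexHull_min (t := {z : Fin 2 → ℝ | 1 ≤ z 0 ∧ z 1 ≤ 1 ∧ c * (z 0 - z 1) ≤ 1}) ?_ ?_ hy
    · rintro z (rfl | rfl | rfl) <;> simp [field]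
    · rintro u ⟨hu₀, hu₁, hu⟩ v ⟨hv₀, hv₁, hv⟩ a b ha hb hab
      simp only [Set.mem_ofPred_eq, Pi.add_apply, Pi.smul_apply, smul_eq_mul]
      refine ⟨by nlinarith, by nlinarith, by nlinarith⟩
  · rintro ⟨h₀, h₁, h⟩
    -- barycentric coordinates of `y`
    let w : Fin 3 → ℝ := ![1 - c * (y 0 - y 1), c * (1 - y 1), c * (y 0 - 1)]
    let v : Fin 3 → Fin 2 → ℝ := ![![1, 1], ![1, (c - 1) / c], ![(c + 1) / c, 1]]
    have hy : y = ∑ i, w i • v i := by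
      ext j; fin_cases j <;> simp [w, v, Fin.sum_univ_three] <;> field_simp <;> ring
    rw [hy]
    refine (convex_convexHull ℝ _).sum_mem (fun i _ => ?_) ?_
      (fun i _ => subset_convexHull ℝ _ ?_)
    · fin_cases i <;> simp [w] <;> nlinarith
    · simp [w, Fin.sum_univ_three]; ring
    · fin_cases i <;> simp [v]

theorem mem_smul_triangle_iff {c t : ℝ} (hc : 0 < c) (ht : 0 ≤ t) {y : Fin 2 → ℝ} :
    y ∈ t • triangle c ↔ t ≤ y 0 ∧ y 1 ≤ t ∧ c * (y 0 - y 1) ≤ t := by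
  rcases ht.eq_or_lt with rfl | ht
  · have hne : (triangle c).Nonempty := ⟨![1, 1], subset_convexHull ℝ _ (by simp)⟩
    rw [Set.zero_smul_set hne, Set.mem_zero]
    constructor
    · rintro rfl
      simp
    · rintro ⟨h₀, h₁, h⟩
      have hy₀ : y 0 = 0 := by nlinarith
      have hy₁ : y 1 = 0 := by nlinarith
      ext i; fin_cases i <;> simpa
  · rw [Set.mem_smul_set_iff_inv_smul_mem₀ ht.ne', mem_triangle_iff hc]
    simp only [Pi.smul_apply, smul_eq_mul, inv_mul_eq_div, ← sub_div, ← mul_div_assoc,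
      one_le_div ht, div_le_one ht]

def latticePoints (S : Set (Fin 2 → ℝ)) (n : ℕ) : Set (Fin 2 → ℤ) :=
  {x | (fun i => (x i : ℝ)) ∈ (n : ℝ) • S}

theorem mem_latticePoints_triangle_iff {q n : ℕ} (hq : 0 < q) {x : Fin 2 → ℤ} :
    x ∈ latticePoints (triangle q) n ↔ n ≤ x 0 ∧ x 1 ≤ n ∧ q * (x 0 - x 1) ≤ n := by
  rw [latticePoints, Set.mem_ofPred_eq, mem_smul_triangle_iff (by positivity) (by positivity)]
  norm_cast

theorem latticePoints_triangle_of_lt {q n : ℕ} (hn : n < q) :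
    latticePoints (triangle q) n = {![(n : ℤ), n]} := by
  ext x
  simp only [mem_latticePoints_triangle_iff (n.zero_le.trans_lt hn), Set.mem_singleton_iff,
    funext_iff, Fin.forall_fin_two, Matrix.cons_val_zero, Matrix.cons_val_one]
  constructor
  · rintro ⟨h₀, h₁, h⟩
    have : x 0 - x 1 < 1 := by nlinarith
    omega
  · rintro ⟨h₀, h₁⟩
    simp [h₀, h₁]

theorem latticePoints_triangle_of_le_of_lt {q n : ℕ} (hqn : q ≤ n) (hn : n < 2 * q) :
    latticePoints (triangle q) n = {![(n : ℤ), n], ![(n : ℤ) + 1, n], ![(n : ℤ), n - 1]} := by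
  ext x
  simp only [mem_latticePoints_triangle_iff (by omega : 0 < q), Set.mem_insert_iff,
    Set.mem_singleton_iff, funext_iff, Fin.forall_fin_two, Matrix.cons_val_zero,
    Matrix.cons_val_one]
  constructor
  · rintro ⟨h₀, h₁, h⟩
    have : x 0 - x 1 < 2 := by nlinarith
    omega
  · rintro (⟨h₀, h₁⟩ | ⟨h₀, h₁⟩ | ⟨h₀, h₁⟩) <;> simp only [h₀, h₁] <;> omega

theorem finsum_mem_latticePoints_triangle_of_le_of_lt {M : Type*} [AddCommMonoid M] {q n : ℕ}
    (hqn : q ≤ n) (hn : n < 2 * q) (f : (Fin 2 → ℤ) → M) :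
    ∑ᶠ x ∈ latticePoints (triangle q) n, f x
      = f ![(n : ℤ), n] + f ![(n : ℤ) + 1, n] + f ![(n : ℤ), n - 1] := by
  rw [latticePoints_triangle_of_le_of_lt hqn hn, finsum_mem_insert _ _ (Set.toFinite _),
    finsum_mem_pair, add_assoc]
  · simp [funext_iff]
  · simp [funext_iff]; omega

/-- For an integer `q ≥ 1`, let `Δ_q ⊆ ℝ²` be the rational triangle with
vertices `(1,1)`, `(1,(q−1)/q)`, `((q+1)/q,1)` (of denominator `q`), let
`ℓ_q(x) = 2q(1−q)x₁ + q(2q−1)x₂` and `w_q = ℓ_q²`. Then, writing `h` for the weighted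
`h*`-polynomial of `Δ_q` (so `(1−t^q)⁵ · Σ_{n≥0}(Σ_{x∈nΔ_q∩ℤ²} ℓ_q(x)²) tⁿ = h(t)`), the
coefficient of `t^{2q−1}` in `h` equals `−q⁴ + 6q³ − 3q²`; in particular it is negative for
every `q ≥ 6`. -/
theorem rational_triangle_negative_coefficient (q : ℕ) (hq : 1 ≤ q)
    (h : Polynomial ℝ)
    (hh : (1 - PowerSeries.X ^ q) ^ 5 *
        (PowerSeries.mk fun n =>
          ∑ᶠ x ∈ {x : Fin 2 → ℤ | (fun i => ((x i : ℝ))) ∈ (n : ℝ) •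
              convexHull ℝ ({![1, 1], ![1, ((q : ℝ) - 1) / q], ![((q : ℝ) + 1) / q, 1]}
                : Set (Fin 2 → ℝ))},
            (2 * (q : ℝ) * (1 - (q : ℝ)) * (x 0 : ℝ)
              + (q : ℝ) * (2 * (q : ℝ) - 1) * (x 1 : ℝ)) ^ 2) = (h : PowerSeries ℝ)) :
    h.coeff (2 * q - 1) = -(q : ℝ) ^ 4 + 6 * (q : ℝ) ^ 3 - 3 * (q : ℝ) ^ 2 ∧
      (6 ≤ q → h.coeff (2 * q - 1) < 0) := by
  have key := congrArg (PowerSeries.coeff (q - 1 + q)) hh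
  rw [PowerSeries.coeff_add_one_sub_X_pow_pow_five_mul (by omega), Polynomial.coeff_coe,
    PowerSeries.coeff_mk, PowerSeries.coeff_mk] at key
  change ∑ᶠ x ∈ latticePoints (triangle q) (q - 1 + q), _
    - 5 * ∑ᶠ x ∈ latticePoints (triangle q) (q - 1), _ = _ at key
  rw [finsum_mem_latticePoints_triangle_of_le_of_lt (by omega) (by omega),
    latticePoints_triangle_of_lt (by omega), finsum_mem_singleton] at key
  have hcoeff : h.coeff (2 * q - 1) = -(q : ℝ) ^ 4 + 6 * (q : ℝ) ^ 3 - 3 * (q : ℝ) ^ 2 := by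
    rw [show 2 * q - 1 = q - 1 + q by omega, ← key]
    simp only [Matrix.cons_val_zero, Matrix.cons_val_one]
    push_cast [Nat.cast_sub hq]
    ring
  refine ⟨hcoeff, fun hq6 => ?_⟩
  have hq6ℝ : (6 : ℝ) ≤ q := by exact_mod_cast hq6
  rw [hcoeff]
  nlinarith [sq_nonneg ((q : ℝ) - 3)]
end
end
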